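/- The canonical successor function S on complete types is sensible: for Ψ=S(Φ), (1) ○φ∈Φ⁺ iff φ∈Ψ⁺; (2) ○φ∈Φ⁻ iff φ∈Ψ⁻; (3) if ◇φ∈Φ⁺ then φ∈Φ⁺ or ◇φ∈Ψ⁺; (4) if ◇φ∈Φ⁻ then φ∈Φ⁻ and ◇φ∈Ψ⁻; (5) if □φ∈Φ⁺ then φ∈Φ⁺ and □φ∈Ψ⁺; (6) if □φ∈Φ⁻ then φ∈Φ⁻ or □φ∈Ψ⁻. -/

import Mathlib

/-!
A complete type is closed under derivable implication and is prime: it contains a disjunct of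
each disjunction it contains, and dually its negative part contains a conjunct of each
conjunction in it. Clauses (3)–(6) are the fixpoint axioms `φ ∨ ○◇φ ⇒ ◇φ`, `□φ ⇒ φ ∧ ○□φ`
and their converses, obtained from the induction axioms, read through these closure properties.
-/

/-- Formulas of the Gödel temporal language. -/
inductive GF where
  | var : Nat → GF
  | and : GF → GF → GF
  | or : GF → GF → GF
  | imp : GF → GF → GF
  | coimp : GF → GF → GF
  | next : GF → GF
  | dia : GF → GF
  | box : GF → GF
deriving DecidableEq

/-- ⊥ := p ⇐ p -/
def GF.bot : GF := .coimp (.var 0) (.var 0)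
/-- ⊤ := p ⇒ p -/
def GF.top : GF := .imp (.var 0) (.var 0)
/-- ¬φ := φ ⇒ ⊥ -/
def GF.neg (φ : GF) : GF := .imp φ .bot
/-- φ ⟺ ψ := (φ⇒ψ) ∧ (ψ⇒φ) -/
def GF.iffF (φ ψ : GF) : GF := .and (.imp φ ψ) (.imp ψ φ)

/-- The deductive calculus GTL. Intuitionistic tautologies are generated by a
standard Hilbert-style axiomatization of intuitionistic propositional logic. -/
inductive GTL : GF → Prop where
  -- intuitionistic axioms
  | i1 (φ ψ : GF) : GTL (.imp φ (.imp ψ φ))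
  | i2 (φ ψ χ : GF) : GTL (.imp (.imp φ (.imp ψ χ)) (.imp (.imp φ ψ) (.imp φ χ)))
  | i3 (φ ψ : GF) : GTL (.imp (.and φ ψ) φ)
  | i4 (φ ψ : GF) : GTL (.imp (.and φ ψ) ψ)
  | i5 (φ ψ : GF) : GTL (.imp φ (.imp ψ (.and φ ψ)))
  | i6 (φ ψ : GF) : GTL (.imp φ (.or φ ψ))
  | i7 (φ ψ : GF) : GTL (.imp ψ (.or φ ψ))
  | i8 (φ ψ χ : GF) : GTL (.imp (.imp φ χ) (.imp (.imp ψ χ) (.imp (.or φ ψ) χ)))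
  | i9 (φ : GF) : GTL (.imp .bot φ)
  -- H-B axioms and rules
  | hb1 (φ ψ : GF) : GTL (.imp φ (.or ψ (.coimp φ ψ)))
  | hbMon {φ ψ : GF} (θ : GF) : GTL (.imp φ ψ) → GTL (.imp (.coimp φ θ) (.coimp ψ θ))
  | hbDis {φ ψ γ : GF} : GTL (.imp φ (.or ψ γ)) → GTL (.imp (.coimp φ ψ) γ)
  -- linearity axioms
  | lin (φ ψ : GF) : GTL (.or (.imp φ ψ) (.imp ψ φ))
  | colin (φ ψ : GF) : GTL (GF.neg (.and (.coimp φ ψ) (.coimp ψ φ)))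
  -- temporal axioms
  | nBot : GTL (GF.neg (.next .bot))
  | nOr (φ ψ : GF) : GTL (.imp (.next (.or φ ψ)) (.or (.next φ) (.next ψ)))
  | nAnd (φ ψ : GF) : GTL (.imp (.and (.next φ) (.next ψ)) (.next (.and φ ψ)))
  | nImp (φ ψ : GF) : GTL (GF.iffF (.next (.imp φ ψ)) (.imp (.next φ) (.next ψ)))
  | kBox (φ ψ : GF) : GTL (.imp (.box (.imp φ ψ)) (.imp (.box φ) (.box ψ)))
  | kDia (φ ψ : GF) : GTL (.imp (.box (.imp φ ψ)) (.imp (.dia φ) (.dia ψ)))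
  | boxFix (φ : GF) : GTL (.imp (.box φ) (.and φ (.next (.box φ))))
  | diaFix (φ : GF) : GTL (.imp (.or φ (.next (.dia φ))) (.dia φ))
  | indBox (φ : GF) : GTL (.imp (.box (.imp φ (.next φ))) (.imp φ (.box φ)))
  | indDia (φ : GF) : GTL (.imp (.box (.imp (.next φ) φ)) (.imp (.dia φ) φ))
  -- back–up confluence axiom
  | backup (φ ψ : GF) : GTL (.imp (.next (.coimp φ ψ)) (.coimp (.next φ) (.next ψ)))
  -- standard modal rules
  | mp {φ ψ : GF} : GTL φ → GTL (.imp φ ψ) → GTL ψ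
  | necN {φ : GF} : GTL φ → GTL (.next φ)
  | necBox {φ : GF} : GTL φ → GTL (.box φ)

/-- Finite conjunction (⋀∅ = ⊤). -/
def GF.conj : List GF → GF := fun l => l.foldr .and .top
/-- Finite disjunction (⋁∅ = ⊥). -/
def GF.disj : List GF → GF := fun l => l.foldr .or .bot

/-- Gentzen-style consequence: Γ ⊢ Δ iff ⋀Γ' ⇒ ⋁Δ' ∈ GTL for some finite
Γ' ⊆ Γ, Δ' ⊆ Δ. -/
def GSeq (Γ Δ : Set GF) : Prop :=
  ∃ l m : List GF, (∀ φ ∈ l, φ ∈ Γ) ∧ (∀ φ ∈ m, φ ∈ Δ) ∧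
    GTL (.imp (GF.conj l) (GF.disj m))

/-- A complete type: a consistent saturated pair. -/
def CompleteType (P N : Set GF) : Prop :=
  ¬ GSeq P N ∧ ∀ φ : GF, φ ∈ P ∨ φ ∈ N

/-- The canonical order: Φ ≤ Ψ iff Φ⁻ ⊆ Ψ⁻ and Φ⁺ ⊇ Ψ⁺. -/
def TLe (Φ Ψ : Set GF × Set GF) : Prop := Φ.2 ⊆ Ψ.2 ∧ Ψ.1 ⊆ Φ.1

/-- The canonical successor: S(Φ) = (⊖Φ⁺, ⊖Φ⁻). -/
def TSucc (Φ : Set GF × Set GF) : Set GF × Set GF :=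
  ({φ | GF.next φ ∈ Φ.1}, {φ | GF.next φ ∈ Φ.2})

namespace GTL

theorem imp_trans {a b c : GF} (hab : GTL (a.imp b)) (hbc : GTL (b.imp c)) :
    GTL (a.imp c) :=
  hab.mp ((hbc.mp (i1 (b.imp c) a)).mp (i2 a b c))

theorem imp_and {a b c : GF} (hb : GTL (a.imp b)) (hc : GTL (a.imp c)) :
    GTL (a.imp (b.and c)) :=
  hc.mp ((imp_trans hb (i5 b c)).mp (i2 a c (b.and c)))

theorem or_imp {a b c : GF} (ha : GTL (a.imp c)) (hb : GTL (b.imp c)) :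
    GTL ((a.or b).imp c) :=
  hb.mp (ha.mp (i8 a b c))

theorem next_mono {φ ψ : GF} (h : GTL (φ.imp ψ)) : GTL (φ.next.imp ψ.next) :=
  (necN h).mp ((nImp φ ψ).mp (i3 _ _))

theorem box_mono {φ ψ : GF} (h : GTL (φ.imp ψ)) : GTL (φ.box.imp ψ.box) :=
  (necBox h).mp (kBox φ ψ)

theorem dia_mono {φ ψ : GF} (h : GTL (φ.imp ψ)) : GTL (φ.dia.imp ψ.dia) :=
  (necBox h).mp (kDia φ ψ)

/-- `φ ∨ ○◇φ` is closed under `○`, so by `indDia` it absorbs `◇(φ ∨ ○◇φ)`, which contains `◇φ`. -/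
theorem dia_unfold (φ : GF) : GTL (φ.dia.imp (φ.or φ.dia.next)) := by
  have hclosed : GTL ((φ.or φ.dia.next).next.imp (φ.or φ.dia.next)) :=
    imp_trans (next_mono (diaFix φ)) (i7 φ φ.dia.next)
  exact imp_trans (dia_mono (i6 φ φ.dia.next)) ((necBox hclosed).mp (indDia _))

/-- `φ ∧ ○□φ` implies its own `○`, so by `indBox` it implies `□(φ ∧ ○□φ)`, hence `□φ`. -/
theorem box_fold (φ : GF) : GTL ((φ.and φ.box.next).imp φ.box) := by
  have hclosed : GTL ((φ.and φ.box.next).imp (φ.and φ.box.next).next) :=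
    imp_trans (i4 φ φ.box.next) (next_mono (boxFix φ))
  exact imp_trans ((necBox hclosed).mp (indBox _)) (box_mono (i3 φ φ.box.next))

theorem conj_singleton (a : GF) : GTL ((GF.conj [a]).imp a) :=
  i3 a .top

theorem conj_pair (a b : GF) : GTL ((GF.conj [a, b]).imp (a.and b)) :=
  imp_and (i3 a _) (imp_trans (i4 a _) (i3 b .top))

theorem disj_singleton (b : GF) : GTL (b.imp (GF.disj [b])) :=
  i6 b .bot

theorem disj_pair (b c : GF) : GTL ((b.or c).imp (GF.disj [b, c])) :=
  or_imp (i6 b _) (imp_trans (i6 c .bot) (i7 b _))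

end GTL

namespace CompleteType

open GTL

variable {P N : Set GF} {a b c : GF}

theorem not_imp (h : CompleteType P N) (ha : a ∈ P) (hb : b ∈ N) : ¬ GTL (a.imp b) :=
  fun hab => h.1 ⟨[a], [b], by simpa using ha, by simpa using hb,
    imp_trans (conj_singleton a) (imp_trans hab (disj_singleton b))⟩

theorem mem_pos_of_imp (h : CompleteType P N) (hab : GTL (a.imp b)) (ha : a ∈ P) : b ∈ P :=
  (h.2 b).resolve_right fun hb => h.not_imp ha hb hab

theorem mem_neg_of_imp (h : CompleteType P N) (hab : GTL (a.imp b)) (hb : b ∈ N) : a ∈ N :=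
  (h.2 a).resolve_left fun ha => h.not_imp ha hb hab

theorem mem_or_mem_of_imp_or (h : CompleteType P N) (habc : GTL (a.imp (b.or c)))
    (ha : a ∈ P) : b ∈ P ∨ c ∈ P := by
  refine or_iff_not_imp_left.2 fun hbP => (h.2 c).resolve_right fun hcN => h.1 ?_
  have hbN : b ∈ N := (h.2 b).resolve_left hbP
  exact ⟨[a], [b, c], by simpa using ha, by simp [hbN, hcN],
    imp_trans (conj_singleton a) (imp_trans habc (disj_pair b c))⟩

theorem mem_neg_or_mem_neg_of_and_imp (h : CompleteType P N) (habc : GTL ((a.and b).imp c))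
    (hc : c ∈ N) : a ∈ N ∨ b ∈ N := by
  refine or_iff_not_imp_left.2 fun haN => (h.2 b).resolve_left fun hbP => h.1 ?_
  have haP : a ∈ P := (h.2 a).resolve_right haN
  exact ⟨[a, b], [c], by simp [haP, hbP], by simpa using hc,
    imp_trans (conj_pair a b) (imp_trans habc (disj_singleton c))⟩

end CompleteType

open GTL in
/-- The canonical successor is sensible. -/
theorem stmt17 (P N : Set GF) (h : CompleteType P N) :
    (∀ φ : GF, GF.next φ ∈ P ↔ φ ∈ (TSucc (P, N)).1) ∧
    (∀ φ : GF, GF.next φ ∈ N ↔ φ ∈ (TSucc (P, N)).2) ∧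
    (∀ φ : GF, GF.dia φ ∈ P → φ ∈ P ∨ GF.dia φ ∈ (TSucc (P, N)).1) ∧
    (∀ φ : GF, GF.dia φ ∈ N → φ ∈ N ∧ GF.dia φ ∈ (TSucc (P, N)).2) ∧
    (∀ φ : GF, GF.box φ ∈ P → φ ∈ P ∧ GF.box φ ∈ (TSucc (P, N)).1) ∧
    (∀ φ : GF, GF.box φ ∈ N → φ ∈ N ∨ GF.box φ ∈ (TSucc (P, N)).2) := by
  refine ⟨fun φ => Iff.rfl, fun φ => Iff.rfl, fun φ hφ => ?_, fun φ hφ => ⟨?_, ?_⟩,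
    fun φ hφ => ⟨?_, ?_⟩, fun φ hφ => ?_⟩
  · exact h.mem_or_mem_of_imp_or (dia_unfold φ) hφ
  · exact h.mem_neg_of_imp (imp_trans (i6 φ _) (diaFix φ)) hφ
  · exact h.mem_neg_of_imp (imp_trans (i7 φ _) (diaFix φ)) hφ
  · exact h.mem_pos_of_imp (imp_trans (boxFix φ) (i3 φ _)) hφ
  · exact h.mem_pos_of_imp (imp_trans (boxFix φ) (i4 φ _)) hφ
  · exact h.mem_neg_or_mem_neg_of_and_imp (box_fold φ) hφ
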